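/- Let (G,σ) be a connected flow-admissible signed graph with minimum signature σ, let X be its set of negative edges, B its set of bridges, and S the set of edges s for which some 2-edge-cut {s,t} of G has t ∈ X. Then B ∩ X = ∅, S ∩ X = ∅, and the graph G − X − B − S is a bridgeless balanced graph. -/

import Mathlib

open Finset
open scoped Classical

noncomputable section

namespace SignedCircuitCover

variable {V E : Type} [Fintype V] [Fintype E] [DecidableEq V] [DecidableEq E]

/-- `e` is a loop. -/
def IsLoop (ends : E → Sym2 V) (e : E) : Prop := (ends e).IsDiag

/-- The vertices incident with an edge of `F`. -/
def support (ends : E → Sym2 V) (F : Finset E) : Finset V :=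
  Finset.univ.filter fun v => ∃ e ∈ F, v ∈ ends e

/-- Degree of `v` in the subgraph with edge set `F` (a loop counts twice). -/
def degree (ends : E → Sym2 V) (F : Finset E) (v : V) : ℕ :=
  ∑ e ∈ F, (if ends e = Sym2.diag v then 2 else if v ∈ ends e then 1 else 0)

/-- Reachability inside the edge set `F`. -/
def Reach (ends : E → Sym2 V) (F : Finset E) : V → V → Prop :=
  Relation.ReflTransGen fun a b => ∃ e ∈ F, ends e = s(a, b)

/-- The subgraph with edge set `F` is connected. -/
def ConnectedOn (ends : E → Sym2 V) (F : Finset E) : Prop :=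
  ∀ u ∈ support ends F, ∀ v ∈ support ends F, Reach ends F u v

/-- The whole graph is connected. -/
def Connected (ends : E → Sym2 V) : Prop :=
  ∀ u v : V, Reach ends (Finset.univ : Finset E) u v

/-- `F` is the edge set of a circuit (connected, 2-regular; a loop is a circuit). -/
def IsCircuit (ends : E → Sym2 V) (F : Finset E) : Prop :=
  F.Nonempty ∧ ConnectedOn ends F ∧ ∀ v ∈ support ends F, degree ends F v = 2

/-- `F` is the edge set of an Eulerian subgraph (connected, all degrees even). -/
def IsEulerianOn (ends : E → Sym2 V) (F : Finset E) : Prop :=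
  ConnectedOn ends F ∧ ∀ v ∈ support ends F, Even (degree ends F v)

/-- Negative edges of `F` (`sgn e = true` means `e` is negative). -/
def negEdges (sgn : E → Bool) (F : Finset E) : Finset E := F.filter fun e => sgn e = true

def IsBalancedCircuit (ends : E → Sym2 V) (sgn : E → Bool) (F : Finset E) : Prop :=
  IsCircuit ends F ∧ Even (negEdges sgn F).card

def IsUnbalancedCircuit (ends : E → Sym2 V) (sgn : E → Bool) (F : Finset E) : Prop :=
  IsCircuit ends F ∧ Odd (negEdges sgn F).card

/-- `P` is the edge set of a path with (distinct) end-vertices `u` and `v`. -/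
def IsPath (ends : E → Sym2 V) (P : Finset E) (u v : V) : Prop :=
  P.Nonempty ∧ ConnectedOn ends P ∧ u ≠ v ∧
    u ∈ support ends P ∧ v ∈ support ends P ∧
    degree ends P u = 1 ∧ degree ends P v = 1 ∧
    ∀ w ∈ support ends P, w ≠ u → w ≠ v → degree ends P w = 2

/-- A short barbell: two unbalanced circuits meeting at exactly one vertex. -/
def IsShortBarbell (ends : E → Sym2 V) (sgn : E → Bool) (F : Finset E) : Prop :=
  ∃ C₁ C₂ : Finset E, Disjoint C₁ C₂ ∧ F = C₁ ∪ C₂ ∧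
    IsUnbalancedCircuit ends sgn C₁ ∧ IsUnbalancedCircuit ends sgn C₂ ∧
    ∃ v : V, support ends C₁ ∩ support ends C₂ = {v}

/-- A long barbell: two disjoint unbalanced circuits joined by a path meeting
them only at its end-vertices. -/
def IsLongBarbell (ends : E → Sym2 V) (sgn : E → Bool) (F : Finset E) : Prop :=
  ∃ (C₁ C₂ P : Finset E) (u v : V),
    Disjoint C₁ C₂ ∧ Disjoint C₁ P ∧ Disjoint C₂ P ∧ F = C₁ ∪ C₂ ∪ P ∧
    IsUnbalancedCircuit ends sgn C₁ ∧ IsUnbalancedCircuit ends sgn C₂ ∧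
    Disjoint (support ends C₁) (support ends C₂) ∧
    IsPath ends P u v ∧
    support ends P ∩ support ends C₁ = {u} ∧
    support ends P ∩ support ends C₂ = {v}

def IsBarbell (ends : E → Sym2 V) (sgn : E → Bool) (F : Finset E) : Prop :=
  IsShortBarbell ends sgn F ∨ IsLongBarbell ends sgn F

/-- A signed circuit: a balanced circuit, a short barbell or a long barbell. -/
def IsSignedCircuit (ends : E → Sym2 V) (sgn : E → Bool) (F : Finset E) : Prop :=
  IsBalancedCircuit ends sgn F ∨ IsShortBarbell ends sgn F ∨ IsLongBarbell ends sgn F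

/-- `e` is a bridge (cut-edge) of the subgraph with edge set `F`. -/
def IsBridgeIn (ends : E → Sym2 V) (F : Finset E) (e : E) : Prop :=
  e ∈ F ∧ ∀ a b : V, ends e = s(a, b) → ¬ Reach ends (F.erase e) a b

/-- The bridges of the whole graph. -/
def bridges (ends : E → Sym2 V) : Finset E :=
  Finset.univ.filter fun e => IsBridgeIn ends Finset.univ e

/-- The non-bridge edges of the whole graph. -/
def nonbridges (ends : E → Sym2 V) : Finset E := Finset.univ \ bridges ends

/-- Reachability inside `F` avoiding the vertex `x`. -/
def ReachAvoid (ends : E → Sym2 V) (F : Finset E) (x : V) : V → V → Prop :=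
  Relation.ReflTransGen fun a b => a ≠ x ∧ b ≠ x ∧ ∃ e ∈ F, ends e = s(a, b)

/-- `x` is a cut-vertex of the subgraph with edge set `F`. -/
def IsCutVertexOn (ends : E → Sym2 V) (F : Finset E) (x : V) : Prop :=
  ∃ a ∈ support ends F, ∃ b ∈ support ends F,
    a ≠ x ∧ b ≠ x ∧ Reach ends F a b ∧ ¬ ReachAvoid ends F x a b

/-- The subgraph with edge set `F` is 2-connected (connected and without cut-vertices). -/
def TwoConnectedOn (ends : E → Sym2 V) (F : Finset E) : Prop :=
  ConnectedOn ends F ∧ ∀ x : V, ¬ IsCutVertexOn ends F x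

/-- The whole graph is 2-connected. -/
def TwoConnected (ends : E → Sym2 V) : Prop :=
  Connected ends ∧ ∀ x : V, ¬ IsCutVertexOn ends (Finset.univ : Finset E) x

/-- Total length of a collection of subgraphs. -/
def totalLength (𝒞 : List (Finset E)) : ℕ := (𝒞.map Finset.card).sum

/-- The width of the edge `e` with respect to the collection `𝒞`. -/
def widthAt (𝒞 : List (Finset E)) (e : E) : ℕ := (𝒞.filter fun C => e ∈ C).length

/-- `𝒞` covers every edge of the graph. -/
def CoversAll (𝒞 : List (Finset E)) : Prop := ∀ e : E, ∃ C ∈ 𝒞, e ∈ C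

/-- A tree of Eulerian graphs: connected, and after deleting all bridges every
component is Eulerian (equivalently all degrees in the bridgeless part are even). -/
def IsTreeOfEulerian (ends : E → Sym2 V) : Prop :=
  Connected ends ∧ ∀ v : V, Even (degree ends (nonbridges ends) v)

/-- Non-bridge non-loop edges. -/
def nbnl (ends : E → Sym2 V) : Finset E :=
  (nonbridges ends).filter fun e => ¬ IsLoop ends e

/-- A tree of circuits: connected, and after deleting all bridges and loops every
vertex has degree 0 or 2 (each component is an isolated vertex or a circuit). -/
def IsTreeOfCircuits (ends : E → Sym2 V) : Prop :=
  Connected ends ∧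
    ∀ v : V, degree ends (nbnl ends) v = 0 ∨ degree ends (nbnl ends) v = 2

/-- The balloon containing `v`: the edge set of the component of `v` in the
graph of non-bridge non-loop edges. -/
def compBalloon (ends : E → Sym2 V) (v : V) : Finset E :=
  (nbnl ends).filter fun e => ∃ w ∈ ends e, Reach ends (nbnl ends) v w

/-- Valency of the balloon of `v`: the number of bridges and loops incident
with its component. -/
def balloonValency (ends : E → Sym2 V) (v : V) : ℕ :=
  (Finset.univ.filter fun e =>
    (IsBridgeIn ends Finset.univ e ∨ IsLoop ends e) ∧
      ∃ w ∈ ends e, Reach ends (nbnl ends) v w).card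

/-- A balloon consisting of a single negative loop. -/
def IsNegLoopBalloon (ends : E → Sym2 V) (sgn : E → Bool) (B : Finset E) : Prop :=
  ∃ e : E, IsLoop ends e ∧ sgn e = true ∧ B = {e}

/-- A leaf balloon: a negative loop, or a nontrivial balloon of valency 1. -/
def IsLeafBalloon (ends : E → Sym2 V) (sgn : E → Bool) (B : Finset E) : Prop :=
  IsNegLoopBalloon ends sgn B ∨
    ∃ v : V, B = compBalloon ends v ∧ B.Nonempty ∧ balloonValency ends v = 1

/-- A leaf circuit: a negative loop, or a balloon of valency 1 which is a circuit. -/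
def IsLeafCircuit (ends : E → Sym2 V) (sgn : E → Bool) (B : Finset E) : Prop :=
  IsNegLoopBalloon ends sgn B ∨
    ∃ v : V, B = compBalloon ends v ∧ IsCircuit ends B ∧ balloonValency ends v = 1

/-- An inner circuit: a balloon of valency at least 2 which is a circuit. -/
def IsInnerCircuit (ends : E → Sym2 V) (B : Finset E) : Prop :=
  ∃ v : V, B = compBalloon ends v ∧ IsCircuit ends B ∧ 2 ≤ balloonValency ends v

/-- Number of unbalanced circuits of a tree of circuits: negative loops together
with the unbalanced (nontrivial) balloons. -/
def numUnbalancedCircuits (ends : E → Sym2 V) (sgn : E → Bool) : ℕ :=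
  (Finset.univ.filter fun e : E => IsLoop ends e ∧ sgn e = true).card +
    Set.ncard {B : Finset E |
      (∃ v : V, B = compBalloon ends v) ∧ B.Nonempty ∧ Odd (negEdges sgn B).card}

/-- Flow-admissibility: every edge lies in a signed circuit (Bouchet). -/
def FlowAdmissible (ends : E → Sym2 V) (sgn : E → Bool) : Prop :=
  ∀ e : E, ∃ C : Finset E, IsSignedCircuit ends sgn C ∧ e ∈ C

/-- `e` has exactly one end-vertex in `U`. -/
def crosses (ends : E → Sym2 V) (U : Finset V) (e : E) : Prop :=
  ∃ a b : V, ends e = s(a, b) ∧ ((a ∈ U ∧ b ∉ U) ∨ (a ∉ U ∧ b ∈ U))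

/-- Switching the signature at the vertex set `U`. -/
def switch (ends : E → Sym2 V) (U : Finset V) (sgn : E → Bool) : E → Bool :=
  fun e => if crosses ends U e then ! (sgn e) else sgn e

/-- The number of negative edges of a signature. -/
def negCount (sgn : E → Bool) : ℕ := (Finset.univ.filter fun e => sgn e = true).card

/-- `sgn` is a minimum signature: no equivalent (switched) signature has fewer
negative edges. -/
def IsMinSignature (ends : E → Sym2 V) (sgn : E → Bool) : Prop :=
  ∀ U : Finset V, negCount sgn ≤ negCount (switch ends U sgn)

/-- `{e₁, e₂}` is a 2-edge-cut of the subgraph with edge set `F`. -/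
def IsTwoEdgeCut (ends : E → Sym2 V) (F : Finset E) (e₁ e₂ : E) : Prop :=
  e₁ ≠ e₂ ∧ e₁ ∈ F ∧ e₂ ∈ F ∧ ¬ IsBridgeIn ends F e₁ ∧ ¬ IsBridgeIn ends F e₂ ∧
    (∀ a b : V, ends e₁ = s(a, b) → ¬ Reach ends ((F.erase e₁).erase e₂) a b) ∧
    (∀ a b : V, ends e₂ = s(a, b) → ¬ Reach ends ((F.erase e₁).erase e₂) a b)

/-- `b` is a bridge of `F` whose removal leaves two parts which are both unbalanced. -/
def SeparatesUnbalanced (ends : E → Sym2 V) (sgn : E → Bool) (F : Finset E) (b : E) : Prop :=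
  IsBridgeIn ends F b ∧
    ∀ a c : V, ends b = s(a, c) →
      (∃ C ⊆ F.erase b, IsUnbalancedCircuit ends sgn C ∧
        ∃ w ∈ support ends C, Reach ends (F.erase b) a w) ∧
      (∃ C ⊆ F.erase b, IsUnbalancedCircuit ends sgn C ∧
        ∃ w ∈ support ends C, Reach ends (F.erase b) c w)

/-- `T` is a spanning tree of the whole graph: spanning, connected and acyclic. -/
def IsSpanningTree (ends : E → Sym2 V) (T : Finset E) : Prop :=
  (∀ u v : V, Reach ends T u v) ∧ ∀ C ⊆ T, ¬ IsCircuit ends C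

/-! ### Auxiliary lemmas -/


variable {ends : E → Sym2 V} {sgn : E → Bool}

lemma reach_mono {F F' : Finset E} (h : F ⊆ F') {u v : V}
    (hr : Reach ends F u v) : Reach ends F' u v := by
  refine Relation.ReflTransGen.mono ?_ _ _ hr
  rintro a b ⟨f, hf, hfe⟩
  exact ⟨f, h hf, hfe⟩

lemma reach_symm {F : Finset E} {u v : V}
    (hr : Reach ends F u v) : Reach ends F v u := by
  refine (@Relation.ReflTransGen.symmetric _ _ ⟨?_⟩).symm _ _ hr
  rintro a b ⟨f, hf, hfe⟩
  exact ⟨f, hf, by rw [hfe, Sym2.eq_swap]⟩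

lemma crosses_iff {U : Finset V} {f : E} {a b : V} (h : ends f = s(a, b)) :
    crosses ends U f ↔ Xor' (a ∈ U) (b ∈ U) := by
  constructor
  · rintro ⟨x, y, hxy, hor⟩
    rw [h, Sym2.eq_iff] at hxy
    unfold Xor'
    rcases hxy with ⟨rfl, rfl⟩ | ⟨rfl, rfl⟩ <;> tauto
  · intro hx
    exact ⟨a, b, h, by unfold Xor' Xor at hx; tauto⟩

/-- Side preservation: if no edge of `F` crosses `U`, reachability in `F`
preserves membership in `U`. -/
lemma stay {U : Finset V} {F : Finset E}
    (hF : ∀ f ∈ F, ¬ crosses ends U f) {u v : V}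
    (hr : Reach ends F u v) : (u ∈ U ↔ v ∈ U) := by
  induction hr with
  | refl => rfl
  | tail _ hstep ih =>
    obtain ⟨f, hf, hfe⟩ := hstep
    have := hF f hf
    rw [crosses_iff hfe] at this
    unfold Xor' at this
    constructor
    · intro hu; by_contra hb; exact this (Or.inl ⟨ih.mp hu, hb⟩)
    · intro hb; by_contra hu
      exact this (Or.inr ⟨hb, fun hw => hu (ih.mpr hw)⟩)


set_option linter.unusedSectionVars false

/-- Removing an edge `g` from a reachability: either still reachable, or both
endpoints connect to the ends of `g`. -/
lemma lemmaA {F : Finset E} {u v : V} (h : Reach ends F u v)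
    (g : E) (x y : V) (hg : ends g = s(x, y)) :
    Reach ends (F.erase g) u v ∨
    ((Reach ends (F.erase g) u x ∨ Reach ends (F.erase g) u y) ∧
     (Reach ends (F.erase g) x v ∨ Reach ends (F.erase g) y v)) := by
  induction h with
  | refl => exact Or.inl Relation.ReflTransGen.refl
  | @tail w v hw hstep ih =>
    obtain ⟨f, hfF, hfe⟩ := hstep
    by_cases hfg : f = g
    · subst hfg
      rw [hg, Sym2.eq_iff] at hfe
      rcases ih with ih | ⟨ih1, _⟩
      · rcases hfe with ⟨rfl, rfl⟩ | ⟨rfl, rfl⟩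
        · exact Or.inr ⟨Or.inl ih, Or.inr Relation.ReflTransGen.refl⟩
        · exact Or.inr ⟨Or.inr ih, Or.inl Relation.ReflTransGen.refl⟩
      · rcases hfe with ⟨rfl, rfl⟩ | ⟨rfl, rfl⟩
        · exact Or.inr ⟨ih1, Or.inr Relation.ReflTransGen.refl⟩
        · exact Or.inr ⟨ih1, Or.inl Relation.ReflTransGen.refl⟩
    · have hfF' : f ∈ F.erase g := Finset.mem_erase.mpr ⟨hfg, hfF⟩
      rcases ih with ih | ⟨ih1, ih2⟩
      · exact Or.inl (ih.tail ⟨f, hfF', hfe⟩)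
      · refine Or.inr ⟨ih1, ?_⟩
        rcases ih2 with h2 | h2
        · exact Or.inl (h2.tail ⟨f, hfF', hfe⟩)
        · exact Or.inr (h2.tail ⟨f, hfF', hfe⟩)

/-- If `e` is a non-bridge with ends `a b`, then reachability from `a` to `b`
can avoid all bridges of the graph. -/
lemma lemmaB {e : E} {a b : V} (hends : ends e = s(a, b))
    (heb : ¬ IsBridgeIn ends (Finset.univ : Finset E) e) :
    ∀ F : Finset E, Reach ends F a b → Reach ends (F \ bridges ends) a b := by
  intro F
  induction F using Finset.strongInduction with
  | _ F ih =>
    intro hr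
    by_cases hbr : ∃ g ∈ F, g ∈ bridges ends
    · obtain ⟨g, hgF, hgB⟩ := hbr
      have hgbr : IsBridgeIn ends (Finset.univ : Finset E) g :=
        (Finset.mem_filter.mp hgB).2
      have heg : e ≠ g := fun h => heb (h ▸ hgbr)
      obtain ⟨⟨x, y⟩, hxy⟩ := Quot.exists_rep (ends g)
      have hg : ends g = s(x, y) := hxy.symm
      have hsub : F.erase g ⊆ Finset.univ.erase g :=
        Finset.erase_subset_erase g (Finset.subset_univ F)
      have key : Reach ends (F.erase g) a b := by
        rcases lemmaA hr g x y hg with h | ⟨h1, h2⟩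
        · exact h
        · -- if a connects to one end and b to the other, g would not be a bridge
          rcases h1 with h1 | h1 <;> rcases h2 with h2 | h2
          · exact h1.trans h2
          · exfalso
            have hmem : e ∈ Finset.univ.erase g :=
              Finset.mem_erase.mpr ⟨heg, Finset.mem_univ e⟩
            have stepe : Reach ends (Finset.univ.erase g) a b :=
              Relation.ReflTransGen.single ⟨e, hmem, hends⟩
            have hxa : Reach ends (Finset.univ.erase g) x a :=
              reach_mono hsub (reach_symm h1)
            have hby : Reach ends (Finset.univ.erase g) b y :=
              reach_mono hsub (reach_symm h2)
            exact hgbr.2 x y hg ((hxa.trans stepe).trans hby)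
          · exfalso
            have hmem : e ∈ Finset.univ.erase g :=
              Finset.mem_erase.mpr ⟨heg, Finset.mem_univ e⟩
            have stepe : Reach ends (Finset.univ.erase g) b a :=
              Relation.ReflTransGen.single ⟨e, hmem, by rw [hends, Sym2.eq_swap]⟩
            have hxb : Reach ends (Finset.univ.erase g) x b :=
              reach_mono hsub h2
            have hay : Reach ends (Finset.univ.erase g) a y :=
              reach_mono hsub h1
            exact hgbr.2 x y hg ((hxb.trans stepe).trans hay)
          · exact h1.trans h2
      have hss : F.erase g ⊂ F := Finset.erase_ssubset hgF
      have := ih (F.erase g) hss key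
      have heq : F.erase g \ bridges ends = F \ bridges ends := by
        ext c
        simp only [Finset.mem_sdiff, Finset.mem_erase]
        constructor
        · rintro ⟨⟨_, hc⟩, hcb⟩; exact ⟨hc, hcb⟩
        · rintro ⟨hc, hcb⟩; exact ⟨⟨fun h => hcb (h ▸ hgB), hc⟩, hcb⟩
      rwa [heq] at this
    · push_neg at hbr
      have : F \ bridges ends = F := by
        ext c; simp only [Finset.mem_sdiff]
        exact ⟨fun h => h.1, fun h => ⟨h, hbr c h⟩⟩
      rwa [this]

/-- Minimum signature: in every cut there are at least as many positive as
negative edges. -/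
lemma master (hmin : IsMinSignature ends sgn) (U : Finset V) :
    (((Finset.univ : Finset E).filter (crosses ends U)).filter fun f => sgn f = true).card ≤
    (((Finset.univ : Finset E).filter (crosses ends U)).filter fun f => sgn f = false).card := by
  have h := hmin U
  set c := crosses ends U with hc
  have h1 : (Finset.univ.filter fun f : E => sgn f = true) =
      (Finset.univ.filter fun f => c f ∧ sgn f = true) ∪
      (Finset.univ.filter fun f => ¬ c f ∧ sgn f = true) := by
    ext f; simp only [Finset.mem_filter, Finset.mem_union, Finset.mem_univ, true_and]
    tauto
  have h2 : (Finset.univ.filter fun f : E => switch ends U sgn f = true) =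
      (Finset.univ.filter fun f => c f ∧ sgn f = false) ∪
      (Finset.univ.filter fun f => ¬ c f ∧ sgn f = true) := by
    ext f; simp only [Finset.mem_filter, Finset.mem_union, Finset.mem_univ, true_and]
    unfold switch
    by_cases hcf : c f
    · have hcf' : crosses ends U f := hcf
      simp [if_pos hcf', hcf, Bool.not_eq_true']
    · have hcf' : ¬ crosses ends U f := hcf
      simp [if_neg hcf', hcf]
  have d1 : Disjoint (Finset.univ.filter fun f : E => c f ∧ sgn f = true)
      (Finset.univ.filter fun f : E => ¬ c f ∧ sgn f = true) := by
    rw [Finset.disjoint_left]; intro f hf hg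
    simp only [Finset.mem_filter] at hf hg; exact hg.2.1 hf.2.1
  have d2 : Disjoint (Finset.univ.filter fun f : E => c f ∧ sgn f = false)
      (Finset.univ.filter fun f : E => ¬ c f ∧ sgn f = true) := by
    rw [Finset.disjoint_left]; intro f hf hg
    simp only [Finset.mem_filter] at hf hg; exact hg.2.1 hf.2.1
  unfold negCount at h
  rw [h1, h2, Finset.card_union_of_disjoint d1, Finset.card_union_of_disjoint d2] at h
  have h' := Nat.le_of_add_le_add_right h
  rwa [Finset.filter_filter, Finset.filter_filter]

/-- For a 2-edge-cut `{s,t}` there is a vertex set crossed exactly by `s` and `t`. -/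
lemma twocut_W {s t : E} (h : IsTwoEdgeCut ends (Finset.univ : Finset E) s t) :
    ∃ W : Finset V, ∀ f, crosses ends W f ↔ (f = s ∨ f = t) := by
  obtain ⟨hst, -, -, hnbs, -, hcut1, hcut2⟩ := h
  obtain ⟨⟨x, y⟩, hxy⟩ := Quot.exists_rep (ends s)
  have hs : ends s = s(x, y) := hxy.symm
  set D : Finset E := (Finset.univ.erase s).erase t with hD
  refine ⟨Finset.univ.filter fun v => Reach ends D x v, ?_⟩
  set W : Finset V := Finset.univ.filter fun v => Reach ends D x v with hW
  have hmemW : ∀ v, v ∈ W ↔ Reach ends D x v := by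
    intro v; simp [hW]
  have hxW : x ∈ W := (hmemW x).mpr Relation.ReflTransGen.refl
  have hyW : y ∉ W := fun hy => hcut1 x y hs ((hmemW y).mp hy)
  -- any crossing edge is s or t
  have hsub : ∀ f, crosses ends W f → f = s ∨ f = t := by
    intro f hf
    by_contra hcon
    push_neg at hcon
    have hfD : f ∈ D := by
      simp [hD, Finset.mem_erase, hcon.1, hcon.2]
    obtain ⟨p, q, hpq, hor⟩ := hf
    rcases hor with ⟨hp, hq⟩ | ⟨hp, hq⟩
    · exact hq ((hmemW q).mpr (((hmemW p).mp hp).tail ⟨f, hfD, hpq⟩))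
    · exact hp ((hmemW p).mpr (((hmemW q).mp hq).tail
        ⟨f, hfD, by rw [hpq, Sym2.eq_swap]⟩))
  have hscross : crosses ends W s := by
    rw [crosses_iff hs]; exact Or.inl ⟨hxW, hyW⟩
  have htcross : crosses ends W t := by
    by_contra htc
    have hnc : ∀ f ∈ Finset.univ.erase s, ¬ crosses ends W f := by
      intro f hf hcf
      rcases hsub f hcf with rfl | rfl
      · exact (Finset.mem_erase.mp hf).1 rfl
      · exact htc hcf
    -- s is not a bridge, so x reaches y avoiding s
    have : ¬ IsBridgeIn ends (Finset.univ : Finset E) s := hnbs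
    unfold IsBridgeIn at this
    push_neg at this
    obtain ⟨a, b, hab, hr⟩ := this (Finset.mem_univ s)
    rw [hs, Sym2.eq_iff] at hab
    have hxyreach : Reach ends (Finset.univ.erase s) x y := by
      rcases hab with ⟨rfl, rfl⟩ | ⟨rfl, rfl⟩
      · exact hr
      · exact reach_symm hr
    exact hyW ((stay hnc hxyreach).mp hxW)
  intro f
  refine ⟨hsub f, ?_⟩
  rintro (rfl | rfl)
  · exact hscross
  · exact htcross

lemma crosses_symmDiff {U W : Finset V} {f : E} :
    crosses ends (symmDiff U W) f ↔ Xor' (crosses ends U f) (crosses ends W f) := by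
  obtain ⟨⟨a, b⟩, hab⟩ := Quot.exists_rep (ends f)
  have hf : ends f = s(a, b) := hab.symm
  rw [crosses_iff hf, crosses_iff hf, crosses_iff hf,
    Finset.mem_symmDiff, Finset.mem_symmDiff]
  unfold Xor' Xor
  tauto

lemma no_reach_of_cut {U : Finset V} {F : Finset E}
    (hF : ∀ f ∈ F, ¬ crosses ends U f) {e : E} {a b : V}
    (hab : ends e = s(a, b)) (hcross : crosses ends U e) :
    ¬ Reach ends F a b := by
  intro hr
  have h1 := stay hF hr
  rw [crosses_iff hab] at hcross
  unfold Xor' Xor at hcross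
  tauto

lemma bridge_pos (hmin : IsMinSignature ends sgn) {b : E}
    (hbr : IsBridgeIn ends (Finset.univ : Finset E) b) : sgn b = false := by
  by_contra hb
  rw [Bool.not_eq_false] at hb
  obtain ⟨⟨x, y⟩, hxy⟩ := Quot.exists_rep (ends b)
  have hbe : ends b = s(x, y) := hxy.symm
  set U : Finset V := Finset.univ.filter fun v => Reach ends (Finset.univ.erase b) x v
    with hU
  have hmemU : ∀ v, v ∈ U ↔ Reach ends (Finset.univ.erase b) x v := by
    intro v; simp [hU]
  have hxU : x ∈ U := (hmemU x).mpr Relation.ReflTransGen.refl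
  have hyU : y ∉ U := fun hy => hbr.2 x y hbe ((hmemU y).mp hy)
  have hchar : (Finset.univ : Finset E).filter (crosses ends U) = {b} := by
    ext f
    simp only [Finset.mem_filter, Finset.mem_univ, true_and, Finset.mem_singleton]
    constructor
    · rintro ⟨p, q, hpq, hor⟩
      by_contra hfb
      have hfD : f ∈ Finset.univ.erase b := Finset.mem_erase.mpr ⟨hfb, Finset.mem_univ f⟩
      rcases hor with ⟨hp, hq⟩ | ⟨hp, hq⟩
      · exact hq ((hmemU q).mpr (((hmemU p).mp hp).tail ⟨f, hfD, hpq⟩))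
      · exact hp ((hmemU p).mpr (((hmemU q).mp hq).tail
          ⟨f, hfD, by rw [hpq, Sym2.eq_swap]⟩))
    · rintro rfl
      rw [crosses_iff hbe]
      exact Or.inl ⟨hxU, hyU⟩
  have := master hmin U
  rw [hchar] at this
  have h1 : ({b} : Finset E).filter (fun f => sgn f = true) = {b} := by
    simp [Finset.filter_singleton, hb]
  have h2 : ({b} : Finset E).filter (fun f => sgn f = false) = ∅ := by
    simp [Finset.filter_singleton, hb]
  rw [h1, h2] at this
  simp at this

lemma twocut_partner_pos (hmin : IsMinSignature ends sgn) {s t : E}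
    (h2 : IsTwoEdgeCut ends (Finset.univ : Finset E) s t) (hts : sgn t = true) :
    sgn s = false := by
  by_contra hb
  rw [Bool.not_eq_false] at hb
  obtain ⟨W, hW⟩ := twocut_W h2
  have hchar : (Finset.univ : Finset E).filter (crosses ends W) = {s, t} := by
    ext f
    simp only [Finset.mem_filter, Finset.mem_univ, true_and, Finset.mem_insert,
      Finset.mem_singleton]
    exact hW f
  have hmaster := master hmin W
  rw [hchar] at hmaster
  have hst : s ≠ t := h2.1
  have h1 : ({s, t} : Finset E).filter (fun f => sgn f = true) = {s, t} := by
    ext f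
    simp only [Finset.mem_filter, Finset.mem_insert, Finset.mem_singleton]
    constructor
    · tauto
    · rintro (rfl | rfl) <;> simp [hb, hts]
  have h2' : ({s, t} : Finset E).filter (fun f => sgn f = false) = ∅ := by
    ext f
    simp only [Finset.mem_filter, Finset.mem_insert, Finset.mem_singleton,
      Finset.notMem_empty, iff_false, not_and]
    rintro (rfl | rfl) <;> simp [hb, hts]
  rw [h1, h2'] at hmaster
  rw [Finset.card_insert_of_notMem (by simp [hst])] at hmaster
  simp at hmaster

/-- Main descent: a cut crossed by a positive non-bridge non-`S` edge `e` and
otherwise only by negative edges and `S`-edges leads to a contradiction. -/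
lemma descend (hmin : IsMinSignature ends sgn) (X S : Finset E)
    (hXdef : X = Finset.univ.filter fun e => sgn e = true)
    (hSdef : S = Finset.univ.filter fun e => ∃ t ∈ X, IsTwoEdgeCut ends Finset.univ e t)
    (hXbr : ∀ f ∈ X, ¬ IsBridgeIn ends (Finset.univ : Finset E) f)
    {e : E} (hesgn : sgn e = false)
    (heB : ¬ IsBridgeIn ends (Finset.univ : Finset E) e) (heS : e ∉ S) :
    ∀ (n : ℕ) (U : Finset V),
      ((Finset.univ.filter (crosses ends U)) ∩ S).card = n →
      crosses ends U e →
      (∀ f, crosses ends U f → f = e ∨ sgn f = true ∨ f ∈ S) → False := by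
  have hSpos : ∀ f ∈ S, sgn f = false := by
    intro f hf
    rw [hSdef, Finset.mem_filter] at hf
    obtain ⟨-, t, htX, hcut⟩ := hf
    rw [hXdef, Finset.mem_filter] at htX
    exact twocut_partner_pos hmin hcut htX.2
  intro n
  induction n using Nat.strong_induction_on with
  | _ n ih =>
    intro U hcard hecross hinv
    by_cases hSne : ((Finset.univ.filter (crosses ends U)) ∩ S).Nonempty
    · -- toggle away an S-edge
      obtain ⟨s, hs⟩ := hSne
      rw [Finset.mem_inter, Finset.mem_filter] at hs
      obtain ⟨⟨-, hscross⟩, hsS⟩ := hs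
      have hsS' := hsS
      rw [hSdef, Finset.mem_filter] at hsS'
      obtain ⟨-, t, htX, hcut⟩ := hsS'
      have htsgn : sgn t = true := by
        rw [hXdef, Finset.mem_filter] at htX; exact htX.2
      have htS : t ∉ S := fun h => by simp [hSpos t h] at htsgn
      have hse : s ≠ e := fun h => heS (h ▸ hsS)
      have hte : t ≠ e := fun h => by rw [h, hesgn] at htsgn; exact Bool.false_ne_true htsgn
      obtain ⟨W, hW⟩ := twocut_W hcut
      set U₂ := symmDiff U W with hU₂
      have hcross₂ : ∀ f, crosses ends U₂ f ↔
          Xor' (crosses ends U f) (crosses ends W f) := fun f => crosses_symmDiff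
      have hecross₂ : crosses ends U₂ e := by
        rw [hcross₂]
        have : ¬ crosses ends W e := by
          rw [hW]; rintro (rfl | rfl); exacts [hse rfl, hte rfl]
        exact Or.inl ⟨hecross, this⟩
      have hinv₂ : ∀ f, crosses ends U₂ f → f = e ∨ sgn f = true ∨ f ∈ S := by
        intro f hf
        rw [hcross₂] at hf
        rcases hf with ⟨h1, -⟩ | ⟨h1, -⟩
        · exact hinv f h1
        · rw [hW] at h1
          rcases h1 with rfl | rfl
          · exact Or.inr (Or.inr hsS)
          · exact Or.inr (Or.inl htsgn)
      have hset : (Finset.univ.filter (crosses ends U₂)) ∩ S =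
          ((Finset.univ.filter (crosses ends U)) ∩ S).erase s := by
        ext f
        simp only [Finset.mem_inter, Finset.mem_filter, Finset.mem_univ, true_and,
          Finset.mem_erase]
        constructor
        · rintro ⟨hf, hfS⟩
          rw [hcross₂] at hf
          have hft : f ≠ t := fun h => htS (h ▸ hfS)
          have hfW : crosses ends W f ↔ f = s := by
            rw [hW]; constructor
            · rintro (rfl | rfl); exacts [rfl, absurd rfl hft]
            · rintro rfl; exact Or.inl rfl
          rcases hf with ⟨h1, h2⟩ | ⟨h1, h2⟩
          · exact ⟨fun h => h2 (hfW.mpr h), ⟨h1, hfS⟩⟩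
          · exact absurd (hfW.mp h1).symm (by rintro rfl; exact h2 hscross)
        · rintro ⟨hfs, ⟨hf, hfS⟩⟩
          refine ⟨?_, hfS⟩
          rw [hcross₂]
          have : ¬ crosses ends W f := by
            rw [hW]; rintro (rfl | rfl)
            exacts [hfs rfl, htS hfS]
          exact Or.inl ⟨hf, this⟩
      have hsmem : s ∈ (Finset.univ.filter (crosses ends U)) ∩ S := by
        rw [Finset.mem_inter, Finset.mem_filter]
        exact ⟨⟨Finset.mem_univ s, hscross⟩, hsS⟩
      have hpos : 0 < n := hcard ▸ Finset.card_pos.mpr ⟨s, hsmem⟩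
      refine ih (n - 1) (Nat.sub_lt hpos one_pos) U₂ ?_ hecross₂ hinv₂
      rw [hset, Finset.card_erase_of_mem hsmem, hcard]
    · -- endgame: the cut is e plus negative edges only
      rw [Finset.not_nonempty_iff_eq_empty] at hSne
      set N := (Finset.univ.filter (crosses ends U)).filter fun f => sgn f = true with hN
      have hNcross : ∀ f ∈ N, crosses ends U f := by
        intro f hf
        rw [hN, Finset.mem_filter, Finset.mem_filter] at hf
        exact hf.1.2
      have hNsgn : ∀ f ∈ N, sgn f = true := by
        intro f hf; rw [hN, Finset.mem_filter] at hf; exact hf.2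
      have heN : e ∉ N := fun h => by
        have := hNsgn e h; rw [hesgn] at this; exact Bool.false_ne_true this
      have hchar : Finset.univ.filter (crosses ends U) = insert e N := by
        ext f
        simp only [Finset.mem_filter, Finset.mem_univ, true_and, Finset.mem_insert]
        constructor
        · intro hf
          rcases hinv f hf with rfl | hsgn | hfS
          · exact Or.inl rfl
          · exact Or.inr (by rw [hN]; simp [hf, hsgn])
          · exfalso
            have : f ∈ (Finset.univ.filter (crosses ends U)) ∩ S := by
              rw [Finset.mem_inter, Finset.mem_filter]
              exact ⟨⟨Finset.mem_univ f, hf⟩, hfS⟩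
            rw [hSne] at this
            exact Finset.notMem_empty f this
        · rintro (rfl | hf)
          · exact hecross
          · exact hNcross f hf
      have hmaster := master hmin U
      rw [hchar] at hmaster
      have htrue : (insert e N).filter (fun f => sgn f = true) = N := by
        ext f
        simp only [Finset.mem_filter, Finset.mem_insert]
        constructor
        · rintro ⟨rfl | hf, hsgn⟩
          · rw [hesgn] at hsgn; exact absurd hsgn (by simp)
          · exact hf
        · intro hf; exact ⟨Or.inr hf, hNsgn f hf⟩
      have hfalse : (insert e N).filter (fun f => sgn f = false) = {e} := by
        ext f
        simp only [Finset.mem_filter, Finset.mem_insert, Finset.mem_singleton]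
        constructor
        · rintro ⟨rfl | hf, hsgn⟩
          · rfl
          · rw [hNsgn f hf] at hsgn; exact absurd hsgn (by simp)
        · rintro rfl; exact ⟨Or.inl rfl, hesgn⟩
      rw [htrue, hfalse, Finset.card_singleton] at hmaster
      -- N has at most one element
      interval_cases hNc : N.card
      · -- cut = {e} : e is a bridge, contradiction
        rw [Finset.card_eq_zero] at hNc
        rw [hNc, LawfulSingleton.insert_empty_eq] at hchar
        refine heB ⟨Finset.mem_univ e, ?_⟩
        intro a b hab
        refine no_reach_of_cut ?_ hab hecross
        intro f hf hcf
        have : f ∈ Finset.univ.filter (crosses ends U) := by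
          simp only [Finset.mem_filter]; exact ⟨Finset.mem_univ f, hcf⟩
        rw [hchar, Finset.mem_singleton] at this
        exact (Finset.mem_erase.mp hf).1 this
      · -- cut = {e, t} : {e,t} is a 2-edge-cut with t negative, so e ∈ S
        rw [Finset.card_eq_one] at hNc
        obtain ⟨t, hNt⟩ := hNc
        rw [hNt] at hchar
        have htsgn : sgn t = true := hNsgn t (hNt ▸ Finset.mem_singleton_self t)
        have htcross : crosses ends U t := hNcross t (hNt ▸ Finset.mem_singleton_self t)
        have hte : e ≠ t := fun h => by rw [← h, hesgn] at htsgn; exact Bool.false_ne_true htsgn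
        have htX : t ∈ X := by rw [hXdef, Finset.mem_filter]; exact ⟨Finset.mem_univ t, htsgn⟩
        have hnc : ∀ f ∈ (Finset.univ.erase e).erase t, ¬ crosses ends U f := by
          intro f hf hcf
          have : f ∈ Finset.univ.filter (crosses ends U) := by
            simp only [Finset.mem_filter]; exact ⟨Finset.mem_univ f, hcf⟩
          rw [hchar, Finset.mem_insert, Finset.mem_singleton] at this
          rcases this with rfl | rfl
          · exact (Finset.mem_erase.mp (Finset.mem_of_mem_erase hf)).1 rfl
          · exact (Finset.mem_erase.mp hf).1 rfl
        have hcut : IsTwoEdgeCut ends (Finset.univ : Finset E) e t := by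
          refine ⟨hte, Finset.mem_univ e, Finset.mem_univ t, heB, hXbr t htX, ?_, ?_⟩
          · intro a b hab
            exact no_reach_of_cut hnc hab hecross
          · intro a b hab
            exact no_reach_of_cut hnc hab htcross
        refine heS ?_
        rw [hSdef, Finset.mem_filter]
        exact ⟨Finset.mem_univ e, t, htX, hcut⟩

/-- For a connected flow-admissible signed graph with minimum
signature, bridges and 2-cut partners of negative edges are positive, and
`G − X − B − S` is a bridgeless balanced graph. -/
theorem statement10 {V E : Type} [Fintype V] [Fintype E] [DecidableEq V] [DecidableEq E]
    (ends : E → Sym2 V) (sgn : E → Bool)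
    (hconn : Connected ends)
    (hfa : FlowAdmissible ends sgn)
    (hmin : IsMinSignature ends sgn)
    (X B S : Finset E)
    (hX : X = Finset.univ.filter fun e => sgn e = true)
    (hB : B = bridges ends)
    (hS : S = Finset.univ.filter fun e => ∃ t ∈ X, IsTwoEdgeCut ends Finset.univ e t) :
    B ∩ X = ∅ ∧ S ∩ X = ∅ ∧
    (∀ e ∈ ((Finset.univ \ X) \ B) \ S,
      ¬ IsBridgeIn ends (((Finset.univ \ X) \ B) \ S) e) ∧
    (∀ C ⊆ ((Finset.univ \ X) \ B) \ S, IsCircuit ends C → Even (negEdges sgn C).card) := by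
  have hXbr : ∀ f ∈ X, ¬ IsBridgeIn ends (Finset.univ : Finset E) f := by
    intro f hf hbr
    simp only [hX, Finset.mem_filter, Finset.mem_univ, true_and] at hf
    rw [bridge_pos hmin hbr] at hf
    exact Bool.false_ne_true hf
  have part1 : B ∩ X = ∅ := by
    rw [Finset.eq_empty_iff_forall_notMem]
    intro f hf
    simp only [hB, bridges, Finset.mem_inter, Finset.mem_filter, Finset.mem_univ,
      true_and] at hf
    exact hXbr f hf.2 hf.1
  have part2 : S ∩ X = ∅ := by
    rw [Finset.eq_empty_iff_forall_notMem]
    intro f hf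
    rw [Finset.mem_inter] at hf
    obtain ⟨hfS, hfX⟩ := hf
    simp only [hS, Finset.mem_filter, Finset.mem_univ, true_and] at hfS
    obtain ⟨t, htX, hcut⟩ := hfS
    simp only [hX, Finset.mem_filter, Finset.mem_univ, true_and] at htX hfX
    rw [twocut_partner_pos hmin hcut htX] at hfX
    exact Bool.false_ne_true hfX
  refine ⟨part1, part2, ?_, ?_⟩
  · -- bridgeless
    intro e he hbr
    simp only [Finset.mem_sdiff] at he
    obtain ⟨⟨⟨-, heX⟩, heB⟩, heS⟩ := he
    have hesgn : sgn e = false := by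
      rcases Bool.eq_false_or_eq_true (sgn e) with h | h
      · exact absurd (show e ∈ X by
          simp only [hX, Finset.mem_filter, Finset.mem_univ, true_and]; exact h) heX
      · exact h
    have heB' : ¬ IsBridgeIn ends (Finset.univ : Finset E) e := by
      intro h
      exact heB (by
        simp only [hB, bridges, Finset.mem_filter, Finset.mem_univ, true_and]; exact h)
    obtain ⟨⟨a, b⟩, hab⟩ := Quot.exists_rep (ends e)
    have hends : ends e = s(a, b) := hab.symm
    set K := (Finset.univ \ X) \ S with hK
    set U₀ : Finset V := Finset.univ.filter fun v => Reach ends (K.erase e) a v with hU₀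
    have hmemU : ∀ v, v ∈ U₀ ↔ Reach ends (K.erase e) a v := by intro v; simp [hU₀]
    have hbU : b ∉ U₀ := by
      intro hb
      have hr := (hmemU b).mp hb
      have hr2 := lemmaB hends heB' (K.erase e) hr
      have heq : (K.erase e) \ bridges ends = (((Finset.univ \ X) \ B) \ S).erase e := by
        ext f
        simp only [hK, hB, Finset.mem_sdiff, Finset.mem_erase, bridges,
          Finset.mem_filter, Finset.mem_univ, true_and]
        tauto
      rw [heq] at hr2
      exact hbr.2 a b hends hr2
    have haU : a ∈ U₀ := (hmemU a).mpr Relation.ReflTransGen.refl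
    have hecross : crosses ends U₀ e := by
      rw [crosses_iff hends]; exact Or.inl ⟨haU, hbU⟩
    have hinv : ∀ f, crosses ends U₀ f → f = e ∨ sgn f = true ∨ f ∈ S := by
      intro f hf
      by_contra hcon
      push_neg at hcon
      obtain ⟨hfe, hfsgn, hfS⟩ := hcon
      have hfK : f ∈ K.erase e := by
        simp only [Finset.mem_erase, hK, Finset.mem_sdiff, Finset.mem_univ, true_and]
        refine ⟨hfe, ?_, hfS⟩
        intro hfX
        simp only [hX, Finset.mem_filter, Finset.mem_univ, true_and] at hfX
        exact hfsgn hfX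
      obtain ⟨p, q, hpq, hor⟩ := hf
      rcases hor with ⟨hp, hq⟩ | ⟨hp, hq⟩
      · exact hq ((hmemU q).mpr (((hmemU p).mp hp).tail ⟨f, hfK, hpq⟩))
      · exact hp ((hmemU p).mpr (((hmemU q).mp hq).tail
          ⟨f, hfK, by rw [hpq, Sym2.eq_swap]⟩))
    exact descend hmin X S hX hS hXbr hesgn heB' heS _ U₀ rfl hecross hinv
  · -- balanced
    intro C hC _
    have hempty : negEdges sgn C = ∅ := by
      rw [Finset.eq_empty_iff_forall_notMem]
      intro f hf
      simp only [negEdges, Finset.mem_filter] at hf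
      have hmem := hC hf.1
      simp only [Finset.mem_sdiff] at hmem
      exact hmem.1.1.2 (by
        simp only [hX, Finset.mem_filter, Finset.mem_univ, true_and]; exact hf.2)
    simp [hempty]

end SignedCircuitCover
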